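/- arXiv:1812.04168 — 2 statements merged into one kernel-verified Lean document; each statement's English description precedes it below -/
import Mathlib

section
/- Suppose P(ν) = [[Y, I],[I, X]] is positive definite (so in particular X is positive definite). Then the following are equivalent: (i) S(ν) = [[δ·P(ν), F̃(ν)ᵀ],[F̃(ν), P(ν)]] is positive semidefinite; (ii) δ·P(ν) − R(ν)ᵀ·X·R(ν) is positive semidefinite; (iii) the block matrix [[δ·P(ν), R(ν)ᵀ],[R(ν), X⁻¹]] is positive semidefinite. Moreover F̃(ν) = P(ν)·[[0],[I]]·R(ν), so that F̃(ν)ᵀ·P(ν)⁻¹·F̃(ν) = R(ν)ᵀ·X·R(ν). -/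
open Matrix

/-- P(ν) = [[Y, I],[I, X]]. -/
def Pnu {n : ℕ} (X Y : Matrix (Fin n) (Fin n) ℝ) :
    Matrix (Fin n ⊕ Fin n) (Fin n ⊕ Fin n) ℝ :=
  Matrix.fromBlocks Y 1 1 X

/-- R(ν) = [A·Y + B·K₃, A + B·K₄·C]. -/
def Rnu {n nu ny : ℕ} (A : Matrix (Fin n) (Fin n) ℝ) (B : Matrix (Fin n) (Fin nu) ℝ)
    (C : Matrix (Fin ny) (Fin n) ℝ) (Y : Matrix (Fin n) (Fin n) ℝ)
    (K3 : Matrix (Fin nu) (Fin n) ℝ) (K4 : Matrix (Fin nu) (Fin ny) ℝ) :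
    Matrix (Fin n) (Fin n ⊕ Fin n) ℝ :=
  Matrix.fromCols (A * Y + B * K3) (A + B * K4 * C)

/-- F̃(ν) = [[A·Y + B·K₃, A + B·K₄·C],[X·(A·Y + B·K₃), X·(A + B·K₄·C)]]. -/
def Ftil {n nu ny : ℕ} (A : Matrix (Fin n) (Fin n) ℝ) (B : Matrix (Fin n) (Fin nu) ℝ)
    (C : Matrix (Fin ny) (Fin n) ℝ) (X Y : Matrix (Fin n) (Fin n) ℝ)
    (K3 : Matrix (Fin nu) (Fin n) ℝ) (K4 : Matrix (Fin nu) (Fin ny) ℝ) :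
    Matrix (Fin n ⊕ Fin n) (Fin n ⊕ Fin n) ℝ :=
  Matrix.fromBlocks (A * Y + B * K3) (A + B * K4 * C)
    (X * (A * Y + B * K3)) (X * (A + B * K4 * C))

/-! Writing `N = [[0],[I]]`, one has `F̃ = P N R` and `Nᵀ P N = X`, so `F̃ᵀ P⁻¹ F̃ = Rᵀ X R`.
Both equivalences are then Schur complements: of `P` in the first block matrix, and of `X⁻¹`
in the second; `X` is positive definite as a principal block of `P`. -/

namespace Matrix

variable {l m n α : Type*}

theorem PosDef.toBlocks₂₂ [Fintype m] [Fintype n] [Ring α] [PartialOrder α] [StarRing α]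
    {M : Matrix (m ⊕ n) (m ⊕ n) α} (hM : M.PosDef) : M.toBlocks₂₂.PosDef :=
  hM.submatrix Sum.inr_injective

theorem fromBlocks_mul_fromRows_zero_one [Fintype m] [Fintype n] [DecidableEq n] [Semiring α]
    (A : Matrix l m α) (B : Matrix l n α) (C : Matrix n m α) (D : Matrix n n α) :
    fromBlocks A B C D * fromRows (0 : Matrix m n α) (1 : Matrix n n α) = fromRows B D := by
  simp [fromBlocks_mul_fromRows]

theorem fromRows_zero_one_transpose_mul_fromBlocks_mul [Fintype m] [Fintype n] [DecidableEq n]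
    [Semiring α] (A : Matrix m m α) (B : Matrix m n α) (C : Matrix n m α) (D : Matrix n n α) :
    (fromRows (0 : Matrix m n α) (1 : Matrix n n α))ᵀ * fromBlocks A B C D *
      fromRows (0 : Matrix m n α) (1 : Matrix n n α) = D := by
  simp [Matrix.mul_assoc, fromBlocks_mul_fromRows_zero_one, transpose_fromRows,
    fromCols_mul_fromRows]

theorem IsSymm.transpose_mul_nonsing_inv_mul_cancel [Fintype m] [Fintype n] [DecidableEq m]
    [CommRing α] {P : Matrix m m α} (hP : P.IsSymm) (hdet : IsUnit P.det)
    (N : Matrix m n α) (R : Matrix n l α) :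
    (P * N * R)ᵀ * P⁻¹ * (P * N * R) = Rᵀ * (Nᵀ * P * N) * R := by
  simp only [transpose_mul, hP.eq, Matrix.mul_assoc, mul_nonsing_inv_cancel_left _ _ hdet]

theorem PosDef.fromBlocks₂₂_transpose [Fintype m] [Fintype n] [DecidableEq n] [Field α]
    [PartialOrder α] [StarRing α] [StarOrderedRing α] [TrivialStar α]
    (A : Matrix m m α) (B : Matrix n m α) {D : Matrix n n α} (hD : D.PosDef) :
    (fromBlocks A Bᵀ B D).PosSemidef ↔ (A - Bᵀ * D⁻¹ * B).PosSemidef := by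
  have := hD.isUnit.invertible
  simpa [conjTranspose_eq_transpose_of_trivial] using hD.fromBlocks₂₂ A Bᵀ

end Matrix

theorem Ftil_eq_Pnu_mul_fromRows_mul_Rnu {n nu ny : ℕ}
    (A : Matrix (Fin n) (Fin n) ℝ) (B : Matrix (Fin n) (Fin nu) ℝ)
    (C : Matrix (Fin ny) (Fin n) ℝ) (X Y : Matrix (Fin n) (Fin n) ℝ)
    (K3 : Matrix (Fin nu) (Fin n) ℝ) (K4 : Matrix (Fin nu) (Fin ny) ℝ) :
    Ftil A B C X Y K3 K4 =
      Pnu X Y * fromRows (0 : Matrix (Fin n) (Fin n) ℝ) (1 : Matrix (Fin n) (Fin n) ℝ) *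
        Rnu A B C Y K3 K4 := by
  simp [Ftil, Pnu, Rnu, fromBlocks_mul_fromRows_zero_one]

theorem Ftil_transpose_mul_inv_mul_Ftil {n nu ny : ℕ}
    (A : Matrix (Fin n) (Fin n) ℝ) (B : Matrix (Fin n) (Fin nu) ℝ)
    (C : Matrix (Fin ny) (Fin n) ℝ) (X Y : Matrix (Fin n) (Fin n) ℝ)
    (K3 : Matrix (Fin nu) (Fin n) ℝ) (K4 : Matrix (Fin nu) (Fin ny) ℝ) (hP : (Pnu X Y).PosDef) :
    (Ftil A B C X Y K3 K4)ᵀ * (Pnu X Y)⁻¹ * Ftil A B C X Y K3 K4 =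
      (Rnu A B C Y K3 K4)ᵀ * X * Rnu A B C Y K3 K4 := by
  have hPsymm : (Pnu X Y).IsSymm := isHermitian_iff_isSymm.mp hP.isHermitian
  rw [Ftil_eq_Pnu_mul_fromRows_mul_Rnu,
    hPsymm.transpose_mul_nonsing_inv_mul_cancel hP.det_pos.ne'.isUnit, Pnu,
    fromRows_zero_one_transpose_mul_fromBlocks_mul]

theorem stmt5_general {n nu ny : ℕ}
    (A : Matrix (Fin n) (Fin n) ℝ) (B : Matrix (Fin n) (Fin nu) ℝ)
    (C : Matrix (Fin ny) (Fin n) ℝ)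
    (X Y : Matrix (Fin n) (Fin n) ℝ)
    (K3 : Matrix (Fin nu) (Fin n) ℝ) (K4 : Matrix (Fin nu) (Fin ny) ℝ)
    (δ : ℝ)
    (hP : (Pnu X Y).PosDef) :
    ((Matrix.fromBlocks (δ • Pnu X Y) (Ftil A B C X Y K3 K4)ᵀ
        (Ftil A B C X Y K3 K4) (Pnu X Y)).PosSemidef ↔
      (δ • Pnu X Y -
        (Rnu A B C Y K3 K4)ᵀ * X * Rnu A B C Y K3 K4).PosSemidef) ∧
    ((Matrix.fromBlocks (δ • Pnu X Y) (Ftil A B C X Y K3 K4)ᵀ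
        (Ftil A B C X Y K3 K4) (Pnu X Y)).PosSemidef ↔
      (Matrix.fromBlocks (δ • Pnu X Y) (Rnu A B C Y K3 K4)ᵀ
        (Rnu A B C Y K3 K4) X⁻¹).PosSemidef) ∧
    Ftil A B C X Y K3 K4 =
      Pnu X Y * Matrix.fromRows (0 : Matrix (Fin n) (Fin n) ℝ)
        (1 : Matrix (Fin n) (Fin n) ℝ) * Rnu A B C Y K3 K4 ∧
    (Ftil A B C X Y K3 K4)ᵀ * (Pnu X Y)⁻¹ * Ftil A B C X Y K3 K4 =
      (Rnu A B C Y K3 K4)ᵀ * X * Rnu A B C Y K3 K4 := by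
  have hX : X.PosDef := by simpa [Pnu] using hP.toBlocks₂₂
  have hquad := Ftil_transpose_mul_inv_mul_Ftil A B C X Y K3 K4 hP
  have hSchurF := hP.fromBlocks₂₂_transpose (δ • Pnu X Y) (Ftil A B C X Y K3 K4)
  rw [hquad] at hSchurF
  have hSchurR := hX.inv.fromBlocks₂₂_transpose (δ • Pnu X Y) (Rnu A B C Y K3 K4)
  rw [nonsing_inv_nonsing_inv X hX.det_pos.ne'.isUnit] at hSchurR
  exact ⟨hSchurF, hSchurF.trans hSchurR.symm, Ftil_eq_Pnu_mul_fromRows_mul_Rnu .., hquad⟩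

theorem stmt5 {n nu ny : ℕ}
    (A : Matrix (Fin n) (Fin n) ℝ) (B : Matrix (Fin n) (Fin nu) ℝ)
    (C : Matrix (Fin ny) (Fin n) ℝ)
    (X Y : Matrix (Fin n) (Fin n) ℝ) (hX : X.IsSymm) (hY : Y.IsSymm)
    (K1 : Matrix (Fin n) (Fin n) ℝ) (K2 : Matrix (Fin n) (Fin ny) ℝ)
    (K3 : Matrix (Fin nu) (Fin n) ℝ) (K4 : Matrix (Fin nu) (Fin ny) ℝ)
    (δ : ℝ) (hδ : δ ∈ Set.Ici (1 : ℝ))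
    (hP : (Pnu X Y).PosDef) :
    ((Matrix.fromBlocks (δ • Pnu X Y) (Ftil A B C X Y K3 K4)ᵀ
        (Ftil A B C X Y K3 K4) (Pnu X Y)).PosSemidef ↔
      (δ • Pnu X Y -
        (Rnu A B C Y K3 K4)ᵀ * X * Rnu A B C Y K3 K4).PosSemidef) ∧
    ((Matrix.fromBlocks (δ • Pnu X Y) (Ftil A B C X Y K3 K4)ᵀ
        (Ftil A B C X Y K3 K4) (Pnu X Y)).PosSemidef ↔
      (Matrix.fromBlocks (δ • Pnu X Y) (Rnu A B C Y K3 K4)ᵀ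
        (Rnu A B C Y K3 K4) X⁻¹).PosSemidef) ∧
    Ftil A B C X Y K3 K4 =
      Pnu X Y * Matrix.fromRows (0 : Matrix (Fin n) (Fin n) ℝ)
        (1 : Matrix (Fin n) (Fin n) ℝ) * Rnu A B C Y K3 K4 ∧
    (Ftil A B C X Y K3 K4)ᵀ * (Pnu X Y)⁻¹ * Ftil A B C X Y K3 K4 =
      (Rnu A B C Y K3 K4)ᵀ * X * Rnu A B C Y K3 K4 :=
  stmt5_general A B C X Y K3 K4 δ hP
end

section
/- Fix A ∈ ℝ^{n×n}, B ∈ ℝ^{n×n_u}, C ∈ ℝ^{n_y×n}, μ ∈ [−1,0), and δ ∈ [1,∞). If there exists ν = (X, Y, K_1, K_2, K_3, K_4) with symmetric X, Y ∈ ℝ^{n×n}, K_1 ∈ ℝ^{n×n}, K_2 ∈ ℝ^{n×n_y}, K_3 ∈ ℝ^{n_u×n}, K_4 ∈ ℝ^{n_u×n_y} such that P(ν) ≻ 0, L(ν) ⪰ 0, and L̃(ν) ⪰ 0, then there exist a symmetric positive definite matrix P ∈ ℝ^{2n×2n} and controller matrices A_c ∈ ℝ^{n×n}, B_c ∈ ℝ^{n×n_y},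 C_c ∈ ℝ^{n_u×n}, D_c ∈ ℝ^{n_u×n_y} such that the closed-loop matrix F = [[A + B·D_c·C, B·C_c],[B_c·C, A_c]] satisfies the analysis inequalities Fᵀ·P·F ⪯ (1+μ)·P and Fᵀ·H·P·H·F ⪯ δ·P, where H = [[I, 0],[0, 0]]. -/
/-!
With `W = 1 - X Y`, which is invertible because `P(ν) ≻ 0`, the matrix `Q = [[Y, I], [W, 0]]`
is invertible, and solving the linearizing change of variables
`K₄ = D_c`, `K₂ = X B D_c + B_c`, `K₃ = D_c C Y + C_c W`,
`K₁ = (X (A + B D_c C) + B_c C) Y + (X B C_c + A_c) W` for the controller gives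
`P(ν) = Qᵀ P Q`, `F(ν) = Qᵀ P F Q` and `R(ν) = F₁ Q`, where `P = [[X, I], [I, Z]]` with
`Y + (1 - Y X) Z = 0` and `F₁` is the first block row of the closed-loop matrix `F`.
The congruence `diag(Q, Q)` turns `L(ν) ⪰ 0` into `[[(1+μ) P, (P F)ᵀ], [P F, P]] ⪰ 0`, whose
Schur complement is the first analysis inequality. The congruence `diag(Q, I)` turns
`L̃(ν) ⪰ 0` into `[[δ P, F₁ᵀ], [F₁, 2 I - X]] ⪰ 0`; since `2 I - X ⪯ X⁻¹`, the Schur complement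
with respect to `X⁻¹` gives `δ P - F₁ᵀ X F₁ ⪰ 0`, and `F₁ᵀ X F₁ = Fᵀ H P H F`.
-/

open Matrix

/-- F(ν) = [[A·Y + B·K₃, A + B·K₄·C],[K₁, X·A + K₂·C]]. -/
def Fnu {n nu ny : ℕ} (A : Matrix (Fin n) (Fin n) ℝ) (B : Matrix (Fin n) (Fin nu) ℝ)
    (C : Matrix (Fin ny) (Fin n) ℝ) (X Y : Matrix (Fin n) (Fin n) ℝ)
    (K1 : Matrix (Fin n) (Fin n) ℝ) (K2 : Matrix (Fin n) (Fin ny) ℝ)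
    (K3 : Matrix (Fin nu) (Fin n) ℝ) (K4 : Matrix (Fin nu) (Fin ny) ℝ) :
    Matrix (Fin n ⊕ Fin n) (Fin n ⊕ Fin n) ℝ :=
  Matrix.fromBlocks (A * Y + B * K3) (A + B * K4 * C) K1 (X * A + K2 * C)

namespace Matrix

variable {m n R : Type*}

theorem PosDef.of_fromBlocks [CommRing R] [PartialOrder R] [StarRing R]
    {A : Matrix m m R} {B : Matrix m n R} {C : Matrix n m R} {D : Matrix n n R}
    (h : (fromBlocks A B C D).PosDef) : A.PosDef ∧ D.PosDef :=
  ⟨h.submatrix Sum.inl_injective, h.submatrix Sum.inr_injective⟩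

variable [Fintype m] [Fintype n]

theorem fromBlocks_diag_conj [CommRing R] (S : Matrix m m R) (T : Matrix n n R)
    (A : Matrix m m R) (B : Matrix m n R) (C : Matrix n m R) (D : Matrix n n R) :
    (fromBlocks S 0 0 T)ᵀ * fromBlocks A B C D * fromBlocks S 0 0 T =
      fromBlocks (Sᵀ * A * S) (Sᵀ * B * T) (Tᵀ * C * S) (Tᵀ * D * T) := by
  simp [fromBlocks_transpose, fromBlocks_multiply]

variable [DecidableEq n]

theorem PosSemidef.fromBlocks_add_right [CommRing R] [PartialOrder R] [StarRing R]
    [AddLeftMono R] {A : Matrix m m R} {B : Matrix m n R} {C : Matrix n m R}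
    {D E : Matrix n n R} (h : (fromBlocks A B C D).PosSemidef) (hE : E.PosSemidef) :
    (fromBlocks A B C (D + E)).PosSemidef := by
  have hE' : (fromBlocks 0 0 0 E : Matrix (m ⊕ n) (m ⊕ n) R).PosSemidef := by
    have := hE.mul_mul_conjTranspose_same (fromRows (0 : Matrix m n R) (1 : Matrix n n R))
    rw [conjTranspose_fromRows_eq_fromCols_conjTranspose, fromRows_mul, fromRows_mul_fromCols,
      conjTranspose_zero, conjTranspose_one] at this
    simpa using this
  simpa [fromBlocks_add] using h.add hE'

theorem posSemidef_sub_transpose_mul_inv_mul_of_fromBlocks {A : Matrix m m ℝ}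
    {G : Matrix n m ℝ} {D : Matrix n n ℝ} (hD : D.PosDef)
    (h : (fromBlocks A Gᵀ G D).PosSemidef) : (A - Gᵀ * D⁻¹ * G).PosSemidef := by
  have := hD.isUnit.invertible
  simpa [conjTranspose_eq_transpose_of_trivial] using
    (PosDef.fromBlocks₂₂ A Gᵀ hD).mp (by simpa [conjTranspose_eq_transpose_of_trivial] using h)

theorem PosDef.posSemidef_inv_sub_two_sub {X : Matrix n n ℝ} (hX : X.PosDef) :
    (X⁻¹ - ((2 : ℝ) • 1 - X)).PosSemidef := by
  have := hX.isUnit.invertible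
  have h : (1 - X) * X⁻¹ * (1 - X)ᴴ = X⁻¹ - ((2 : ℝ) • 1 - X) := by
    rw [conjTranspose_sub, conjTranspose_one, hX.isHermitian.eq]
    simp only [Matrix.sub_mul, Matrix.mul_sub, Matrix.one_mul, Matrix.mul_one,
      mul_inv_of_invertible, inv_mul_of_invertible, two_smul]
    abel
  exact h ▸ hX.inv.posSemidef.mul_mul_conjTranspose_same (1 - X)

theorem posSemidef_sub_transpose_mul_mul_of_fromBlocks_two_sub {A : Matrix m m ℝ}
    {G : Matrix n m ℝ} {X : Matrix n n ℝ} (hX : X.PosDef)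
    (h : (fromBlocks A Gᵀ G ((2 : ℝ) • 1 - X)).PosSemidef) : (A - Gᵀ * X * G).PosSemidef := by
  have := hX.isUnit.invertible
  have h' := h.fromBlocks_add_right hX.posSemidef_inv_sub_two_sub
  rw [add_sub_cancel] at h'
  simpa using posSemidef_sub_transpose_mul_inv_mul_of_fromBlocks hX.inv h'

variable [DecidableEq m]

theorem posSemidef_transpose_mul_mul_iff [CommRing R] [PartialOrder R] [StarRing R]
    [TrivialStar R] {U M : Matrix m m R} (hU : IsUnit U) :
    (Uᵀ * M * U).PosSemidef ↔ M.PosSemidef := by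
  simpa [star_eq_conjTranspose, conjTranspose_eq_transpose_of_trivial] using
    hU.posSemidef_star_left_conjugate_iff

theorem posDef_transpose_mul_mul_iff [CommRing R] [PartialOrder R] [StarRing R]
    [TrivialStar R] {U M : Matrix m m R} (hU : IsUnit U) :
    (Uᵀ * M * U).PosDef ↔ M.PosDef := by
  simpa [star_eq_conjTranspose, conjTranspose_eq_transpose_of_trivial] using
    hU.posDef_star_left_conjugate_iff

theorem posSemidef_fromBlocks_transpose_mul_mul_iff [CommRing R] [PartialOrder R] [StarRing R]
    [TrivialStar R] {S : Matrix m m R} {T : Matrix n n R} (hS : IsUnit S) (hT : IsUnit T)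
    {A : Matrix m m R} {G : Matrix n m R} {D : Matrix n n R} :
    (fromBlocks (Sᵀ * A * S) (Tᵀ * G * S)ᵀ (Tᵀ * G * S) (Tᵀ * D * T)).PosSemidef ↔
      (fromBlocks A Gᵀ G D).PosSemidef := by
  rw [show (Tᵀ * G * S)ᵀ = Sᵀ * Gᵀ * T by simp [transpose_mul, Matrix.mul_assoc],
    ← fromBlocks_diag_conj,
    posSemidef_transpose_mul_mul_iff (isUnit_fromBlocks_zero₂₁.mpr ⟨hS, hT⟩)]

theorem transpose_mul_fromBlocks_one_mul_mul [CommRing R] (F P : Matrix (m ⊕ n) (m ⊕ n) R) :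
    Fᵀ * fromBlocks 1 0 0 0 * P * fromBlocks 1 0 0 0 * F =
      F.toRows₁ᵀ * P.toBlocks₁₁ * F.toRows₁ := by
  have hP : fromBlocks 1 0 0 0 * P * fromBlocks 1 0 0 0 =
      fromBlocks P.toBlocks₁₁ 0 0 (0 : Matrix n n R) := by
    conv_lhs => rw [← fromBlocks_toBlocks P]
    simp [fromBlocks_multiply]
  rw [show Fᵀ * fromBlocks 1 0 0 0 * P * fromBlocks 1 0 0 0 * F =
      Fᵀ * (fromBlocks 1 0 0 0 * P * fromBlocks 1 0 0 0) * F by simp only [Matrix.mul_assoc], hP]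
  conv_lhs => rw [← fromRows_toRows F]
  rw [transpose_fromRows, fromCols_mul_fromBlocks, fromCols_mul_fromRows]
  simp

theorem posSemidef_sub_transpose_mul_mul_of_fromBlocks_mul {A P F : Matrix m m ℝ}
    (hP : P.PosDef) (h : (fromBlocks A (P * F)ᵀ (P * F) P).PosSemidef) :
    (A - Fᵀ * P * F).PosSemidef := by
  have := hP.isUnit.invertible
  have e : (P * F)ᵀ * P⁻¹ * (P * F) = Fᵀ * P * F := by
    rw [transpose_mul, (isHermitian_iff_isSymm.mp hP.isHermitian).eq]
    simp only [Matrix.mul_assoc, inv_mul_cancel_left_of_invertible]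
  exact e ▸ posSemidef_sub_transpose_mul_inv_mul_of_fromBlocks hP h

end Matrix

theorem isUnit_one_sub_mul_of_posDef_fromBlocks {n : Type*} [Fintype n] [DecidableEq n]
    {X Y : Matrix n n ℝ} (h : (fromBlocks Y 1 1 X).PosDef) : IsUnit (1 - X * Y) := by
  have hY := h.of_fromBlocks.1
  have := hY.isUnit.invertible
  have hS := isUnit_fromBlocks_iff_of_invertible₁₁.mp h.isUnit
  rw [Matrix.mul_one, Matrix.one_mul, invOf_eq_nonsing_inv] at hS
  have e : 1 - X * Y = -((X - Y⁻¹) * Y) := by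
    rw [Matrix.sub_mul, inv_mul_of_invertible, neg_sub]
  exact e ▸ (hS.mul hY.isUnit).neg

def closedLoop {n nu ny : ℕ} (A : Matrix (Fin n) (Fin n) ℝ) (B : Matrix (Fin n) (Fin nu) ℝ)
    (C : Matrix (Fin ny) (Fin n) ℝ) (Ac : Matrix (Fin n) (Fin n) ℝ)
    (Bc : Matrix (Fin n) (Fin ny) ℝ) (Cc : Matrix (Fin nu) (Fin n) ℝ)
    (Dc : Matrix (Fin nu) (Fin ny) ℝ) : Matrix (Fin n ⊕ Fin n) (Fin n ⊕ Fin n) ℝ :=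
  fromBlocks (A + B * Dc * C) (B * Cc) (Bc * C) Ac

section ChangeOfVariables

variable {n nu ny : ℕ} {A : Matrix (Fin n) (Fin n) ℝ} {B : Matrix (Fin n) (Fin nu) ℝ}
  {C : Matrix (Fin ny) (Fin n) ℝ} {X Y : Matrix (Fin n) (Fin n) ℝ}
  {Ac : Matrix (Fin n) (Fin n) ℝ} {Bc : Matrix (Fin n) (Fin ny) ℝ}
  {Cc : Matrix (Fin nu) (Fin n) ℝ} {Dc : Matrix (Fin nu) (Fin ny) ℝ}

theorem Pnu_eq_mul : Pnu X Y = fromBlocks 1 0 X 1 * fromBlocks Y 1 (1 - X * Y) 0 := by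
  rw [Pnu, fromBlocks_multiply]
  simp

theorem transpose_fromBlocks_mul_fromBlocks_eq {Z : Matrix (Fin n) (Fin n) ℝ} (hX : X.IsSymm)
    (hY : Y.IsSymm) (hZ : Y + (1 - Y * X) * Z = 0) :
    (fromBlocks Y 1 (1 - X * Y) 0)ᵀ * fromBlocks X 1 1 Z = fromBlocks 1 0 X 1 := by
  rw [fromBlocks_transpose, fromBlocks_multiply]
  simp [transpose_sub, transpose_mul, hX.eq, hY.eq, hZ]

theorem Fnu_eq_mul_closedLoop_mul :
    Fnu A B C X Y ((X * (A + B * Dc * C) + Bc * C) * Y + (X * B * Cc + Ac) * (1 - X * Y))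
        (X * B * Dc + Bc) (Dc * C * Y + Cc * (1 - X * Y)) Dc =
      fromBlocks 1 0 X 1 * closedLoop A B C Ac Bc Cc Dc * fromBlocks Y 1 (1 - X * Y) 0 := by
  rw [Fnu, closedLoop, fromBlocks_multiply, fromBlocks_multiply]
  congr 1 <;>
    simp only [Matrix.mul_add, Matrix.add_mul, Matrix.mul_sub, Matrix.mul_assoc, Matrix.one_mul,
      Matrix.mul_one, Matrix.zero_mul, Matrix.mul_zero, add_zero] <;>
    abel

theorem Rnu_eq_toRows₁_mul :
    Rnu A B C Y (Dc * C * Y + Cc * (1 - X * Y)) Dc =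
      (closedLoop A B C Ac Bc Cc Dc).toRows₁ * fromBlocks Y 1 (1 - X * Y) 0 := by
  rw [Rnu, closedLoop, ← fromRows_fromCols_eq_fromBlocks, toRows₁_fromRows,
    fromCols_mul_fromBlocks]
  simp only [Matrix.add_mul, Matrix.mul_add, Matrix.mul_sub, Matrix.mul_assoc, Matrix.mul_one,
    Matrix.mul_zero, add_zero, add_assoc]

end ChangeOfVariables

theorem exists_closedLoop_of_posDef_Pnu {n nu ny : ℕ} (A : Matrix (Fin n) (Fin n) ℝ)
    (B : Matrix (Fin n) (Fin nu) ℝ) (C : Matrix (Fin ny) (Fin n) ℝ)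
    {X Y : Matrix (Fin n) (Fin n) ℝ} (K1 : Matrix (Fin n) (Fin n) ℝ)
    (K2 : Matrix (Fin n) (Fin ny) ℝ) (K3 : Matrix (Fin nu) (Fin n) ℝ)
    (K4 : Matrix (Fin nu) (Fin ny) ℝ) (hP : (Pnu X Y).PosDef) :
    ∃ (Q P : Matrix (Fin n ⊕ Fin n) (Fin n ⊕ Fin n) ℝ) (Ac : Matrix (Fin n) (Fin n) ℝ)
      (Bc : Matrix (Fin n) (Fin ny) ℝ) (Cc : Matrix (Fin nu) (Fin n) ℝ)
      (Dc : Matrix (Fin nu) (Fin ny) ℝ),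
      IsUnit Q ∧ P.toBlocks₁₁ = X ∧ Pnu X Y = Qᵀ * P * Q ∧
      Fnu A B C X Y K1 K2 K3 K4 = Qᵀ * (P * closedLoop A B C Ac Bc Cc Dc) * Q ∧
      Rnu A B C Y K3 K4 = (closedLoop A B C Ac Bc Cc Dc).toRows₁ * Q := by
  obtain ⟨hY, hX⟩ := hP.of_fromBlocks
  have hXs := isHermitian_iff_isSymm.mp hX.isHermitian
  have hYs := isHermitian_iff_isSymm.mp hY.isHermitian
  have hW := (isUnit_iff_isUnit_det _).mp (isUnit_one_sub_mul_of_posDef_fromBlocks hP)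
  have hWT : IsUnit (1 - Y * X).det := by
    rwa [← det_transpose, transpose_sub, transpose_one, transpose_mul, hXs.eq, hYs.eq]
  obtain ⟨Bc, rfl⟩ : ∃ Bc, K2 = X * B * K4 + Bc := ⟨K2 - X * B * K4, by abel⟩
  obtain ⟨Cc, rfl⟩ : ∃ Cc, K3 = K4 * C * Y + Cc * (1 - X * Y) :=
    ⟨(K3 - K4 * C * Y) * (1 - X * Y)⁻¹, by rw [nonsing_inv_mul_cancel_right _ _ hW]; abel⟩
  obtain ⟨Ac, rfl⟩ :
      ∃ Ac, K1 = (X * (A + B * K4 * C) + Bc * C) * Y + (X * B * Cc + Ac) * (1 - X * Y) :=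
    ⟨(K1 - (X * (A + B * K4 * C) + Bc * C) * Y) * (1 - X * Y)⁻¹ - X * B * Cc, by
      rw [add_sub_cancel, nonsing_inv_mul_cancel_right _ _ hW]; abel⟩
  obtain ⟨Z, hZ⟩ : ∃ Z, Y + (1 - Y * X) * Z = 0 :=
    ⟨-((1 - Y * X)⁻¹ * Y), by
      rw [Matrix.mul_neg, mul_nonsing_inv_cancel_left _ _ hWT, add_neg_cancel]⟩
  set Q : Matrix (Fin n ⊕ Fin n) (Fin n ⊕ Fin n) ℝ := fromBlocks Y 1 (1 - X * Y) 0
  have hQP : Qᵀ * fromBlocks X 1 1 Z = fromBlocks 1 0 X 1 :=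
    transpose_fromBlocks_mul_fromBlocks_eq hXs hYs hZ
  have hQ : IsUnit Q := by
    have := (isUnit_iff_isUnit_det _).mp hP.isUnit
    rw [Pnu_eq_mul, det_mul] at this
    exact (isUnit_iff_isUnit_det _).mpr (isUnit_of_mul_isUnit_right this)
  refine ⟨Q, _, Ac, Bc, Cc, K4, hQ, toBlocks_fromBlocks₁₁ .., by rw [hQP, Pnu_eq_mul], ?_,
    Rnu_eq_toRows₁_mul⟩
  rw [← Matrix.mul_assoc, hQP]
  exact Fnu_eq_mul_closedLoop_mul

theorem stmt9_general {n nu ny : ℕ}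
    (A : Matrix (Fin n) (Fin n) ℝ) (B : Matrix (Fin n) (Fin nu) ℝ)
    (C : Matrix (Fin ny) (Fin n) ℝ)
    (μ δ : ℝ)
    (X Y : Matrix (Fin n) (Fin n) ℝ)
    (K1 : Matrix (Fin n) (Fin n) ℝ) (K2 : Matrix (Fin n) (Fin ny) ℝ)
    (K3 : Matrix (Fin nu) (Fin n) ℝ) (K4 : Matrix (Fin nu) (Fin ny) ℝ)
    (hP : (Pnu X Y).PosDef)
    (hL : (Matrix.fromBlocks ((1 + μ) • Pnu X Y) (Fnu A B C X Y K1 K2 K3 K4)ᵀ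
      (Fnu A B C X Y K1 K2 K3 K4) (Pnu X Y)).PosSemidef)
    (hLtil : (Matrix.fromBlocks (δ • Pnu X Y) (Rnu A B C Y K3 K4)ᵀ
      (Rnu A B C Y K3 K4) ((2 : ℝ) • 1 - X)).PosSemidef) :
    ∃ (P : Matrix (Fin n ⊕ Fin n) (Fin n ⊕ Fin n) ℝ)
      (Ac : Matrix (Fin n) (Fin n) ℝ) (Bc : Matrix (Fin n) (Fin ny) ℝ)
      (Cc : Matrix (Fin nu) (Fin n) ℝ) (Dc : Matrix (Fin nu) (Fin ny) ℝ),
      P.PosDef ∧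
      ((1 + μ) • P -
        (Matrix.fromBlocks (A + B * Dc * C) (B * Cc) (Bc * C) Ac)ᵀ * P *
          Matrix.fromBlocks (A + B * Dc * C) (B * Cc) (Bc * C) Ac).PosSemidef ∧
      (δ • P -
        (Matrix.fromBlocks (A + B * Dc * C) (B * Cc) (Bc * C) Ac)ᵀ *
          Matrix.fromBlocks (1 : Matrix (Fin n) (Fin n) ℝ) 0 0
            (0 : Matrix (Fin n) (Fin n) ℝ) * P *
          Matrix.fromBlocks (1 : Matrix (Fin n) (Fin n) ℝ) 0 0
            (0 : Matrix (Fin n) (Fin n) ℝ) *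
          Matrix.fromBlocks (A + B * Dc * C) (B * Cc) (Bc * C) Ac).PosSemidef := by
  obtain ⟨Q, P, Ac, Bc, Cc, Dc, hQ, hP₁₁, hPnu, hFnu, hRnu⟩ :=
    exists_closedLoop_of_posDef_Pnu A B C K1 K2 K3 K4 hP
  rw [closedLoop] at hFnu hRnu
  have hPpos : P.PosDef := (posDef_transpose_mul_mul_iff hQ).mp (hPnu ▸ hP)
  refine ⟨P, Ac, Bc, Cc, Dc, hPpos, ?_, ?_⟩
  · apply posSemidef_sub_transpose_mul_mul_of_fromBlocks_mul hPpos
    rw [← posSemidef_fromBlocks_transpose_mul_mul_iff hQ hQ, Matrix.mul_smul, Matrix.smul_mul,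
      ← hPnu, ← hFnu]
    exact hL
  · rw [transpose_mul_fromBlocks_one_mul_mul, hP₁₁]
    apply posSemidef_sub_transpose_mul_mul_of_fromBlocks_two_sub hP.of_fromBlocks.2
    rw [← posSemidef_fromBlocks_transpose_mul_mul_iff hQ isUnit_one, Matrix.mul_smul,
      Matrix.smul_mul, ← hPnu, transpose_one, Matrix.one_mul, Matrix.one_mul, Matrix.mul_one,
      ← hRnu]
    exact hLtil

theorem stmt9 {n nu ny : ℕ}
    (A : Matrix (Fin n) (Fin n) ℝ) (B : Matrix (Fin n) (Fin nu) ℝ)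
    (C : Matrix (Fin ny) (Fin n) ℝ)
    (μ δ : ℝ) (hμ : μ ∈ Set.Ico (-1 : ℝ) 0) (hδ : δ ∈ Set.Ici (1 : ℝ))
    (X Y : Matrix (Fin n) (Fin n) ℝ) (hX : X.IsSymm) (hY : Y.IsSymm)
    (K1 : Matrix (Fin n) (Fin n) ℝ) (K2 : Matrix (Fin n) (Fin ny) ℝ)
    (K3 : Matrix (Fin nu) (Fin n) ℝ) (K4 : Matrix (Fin nu) (Fin ny) ℝ)
    (hP : (Pnu X Y).PosDef)
    (hL : (Matrix.fromBlocks ((1 + μ) • Pnu X Y) (Fnu A B C X Y K1 K2 K3 K4)ᵀ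
      (Fnu A B C X Y K1 K2 K3 K4) (Pnu X Y)).PosSemidef)
    (hLtil : (Matrix.fromBlocks (δ • Pnu X Y) (Rnu A B C Y K3 K4)ᵀ
      (Rnu A B C Y K3 K4) ((2 : ℝ) • 1 - X)).PosSemidef) :
    ∃ (P : Matrix (Fin n ⊕ Fin n) (Fin n ⊕ Fin n) ℝ)
      (Ac : Matrix (Fin n) (Fin n) ℝ) (Bc : Matrix (Fin n) (Fin ny) ℝ)
      (Cc : Matrix (Fin nu) (Fin n) ℝ) (Dc : Matrix (Fin nu) (Fin ny) ℝ),
      P.PosDef ∧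
      ((1 + μ) • P -
        (Matrix.fromBlocks (A + B * Dc * C) (B * Cc) (Bc * C) Ac)ᵀ * P *
          Matrix.fromBlocks (A + B * Dc * C) (B * Cc) (Bc * C) Ac).PosSemidef ∧
      (δ • P -
        (Matrix.fromBlocks (A + B * Dc * C) (B * Cc) (Bc * C) Ac)ᵀ *
          Matrix.fromBlocks (1 : Matrix (Fin n) (Fin n) ℝ) 0 0
            (0 : Matrix (Fin n) (Fin n) ℝ) * P *
          Matrix.fromBlocks (1 : Matrix (Fin n) (Fin n) ℝ) 0 0
            (0 : Matrix (Fin n) (Fin n) ℝ) *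
          Matrix.fromBlocks (A + B * Dc * C) (B * Cc) (Bc * C) Ac).PosSemidef :=
  stmt9_general A B C μ δ X Y K1 K2 K3 K4 hP hL hLtil
end
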